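/- Degeneration of the stable-manifold parametrization: Let λ be a primitive q-th root of unity and, for (c, a) ∈ P_λ with 0 < |a| < 1, let F_a : ℂ → ℂ² be the parametrization of the strong stable manifold given by F_a(z) = lim_{m→∞} H_{c,a}^{−∘m}(q_a + μ^m·v·z) with μ = −a²/λ, v = (μ/a, 1). Then F_a converges to F₀(z) = (λ/2, z) uniformly on compact subsets of ℂ as a → 0: for every compact set K ⊂ ℂ and every ε > 0 there exists δ > 0 such that for all a with 0 < |a| < δ and (c, a) ∈ P_λ, and all z ∈ K, one has ‖F_a(z) − (λ/2, z)‖ < ε. -/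

import Mathlib

open Metric Filter Topology Set

noncomputable section

/-- The complex Hénon map `H_{c,a}(x,y) = (x² + c + a y, a x)`. -/
def henon (c a : ℂ) : ℂ × ℂ → ℂ × ℂ := fun P => (P.1 ^ 2 + c + a * P.2, a * P.1)

/-- The inverse Hénon map. -/
def henonInv (c a : ℂ) : ℂ × ℂ → ℂ × ℂ :=
  fun P => (P.2 / a, (P.1 - (P.2 / a) ^ 2 - c) / a)

/-- The parameter `c = c(a)` on the curve `P_λ`. -/
def cofLambda (lam a : ℂ) : ℂ :=
  (1 - a ^ 2) * (lam / 2 - a ^ 2 / (2 * lam)) - (lam / 2 - a ^ 2 / (2 * lam)) ^ 2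

/-- The semi-parabolic fixed point `q_a = (λ/2 - a²/(2λ))·(1, a)`. -/
def fixedPt (lam a : ℂ) : ℂ × ℂ :=
  (lam / 2 - a ^ 2 / (2 * lam), a * (lam / 2 - a ^ 2 / (2 * lam)))

/-!
Put `μ = -a²/λ`, so that `λμ = -a²` and `‖μ‖ = ‖a‖²`. Centred at `q_a`, the first coordinates
`y k` of a backward orbit satisfy `λμ y(k+2) = (λ+μ) y(k+1) - y k + y(k+1)²`, whose linear part
has the orbits `ℓ k = μ ℓ(k+1)` (strong stable) and `y k = λ y(k+1)` (parabolic). The starting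
point of the `m`-th approximant of `F_a(z)` lies on `ℓ k = μ^(m+1-k) z/a`. In the coordinates
`U = λ g(k+1) - g k`, `S = μ g(k+1) - g k` of the deviation `g = y - ℓ` the recurrence decouples
into `μ U(k+1) = U k + y(k+1)²` and `λ S(k+1) = S k + y(k+1)²`; as long as `‖ℓ‖` stays below
`1/(24‖μ‖)` this gives `‖U k‖ ≤ 8‖μ‖‖ℓ(k+1)‖²` and `‖S k‖ ≤ 8‖μ‖²‖ℓ(k+1)‖²` by induction.
Hence every approximant lies within `O(‖a‖)` of `(λ/2, z)`, uniformly in `m`, and so does the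
limit `F_a(z)`.
-/

section Shadowing

variable {𝕜 : Type*} [NormedField 𝕜] {lam mu : 𝕜}

lemma norm_le_of_eigencoords_le (hlam : ‖lam‖ = 1) (hmu : ‖mu‖ ≤ 1 / 2) {p q : 𝕜} {B : ℝ}
    (hU : ‖lam * p - q‖ ≤ 8 * ‖mu‖ * B) (hS : ‖mu * p - q‖ ≤ 8 * ‖mu‖ ^ 2 * B) :
    ‖p‖ ≤ 24 * ‖mu‖ * B ∧ ‖q‖ ≤ 32 * ‖mu‖ ^ 2 * B := by
  have hgap : 1 / 2 ≤ ‖lam - mu‖ := by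
    linarith [norm_sub_norm_le lam mu]
  have hp : ‖lam - mu‖ * ‖p‖ ≤ ‖lam * p - q‖ + ‖mu * p - q‖ := by
    rw [← norm_mul, show (lam - mu) * p = (lam * p - q) - (mu * p - q) by ring]
    exact norm_sub_le _ _
  have hq : ‖lam - mu‖ * ‖q‖ ≤ ‖mu‖ * ‖lam * p - q‖ + ‖mu * p - q‖ := by
    rw [← norm_mul, show (lam - mu) * q = mu * (lam * p - q) - lam * (mu * p - q) by ring]
    refine (norm_sub_le _ _).trans_eq ?_
    rw [norm_mul, norm_mul, hlam, one_mul]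
  have hB : 0 ≤ ‖mu‖ * B := by nlinarith [norm_nonneg (lam * p - q)]
  have hmu0 := norm_nonneg mu
  constructor
  · nlinarith [norm_nonneg p]
  · nlinarith [norm_nonneg q, mul_le_mul_of_nonneg_left hU hmu0]

variable {y ℓ : ℕ → 𝕜}

lemma linearOrbit_eigencoords_le_succ (hlam : ‖lam‖ = 1) (hmu : ‖mu‖ ≤ 1 / 2) (hmu₀ : mu ≠ 0)
    (hy : ∀ k, lam * mu * y (k + 2) = (lam + mu) * y (k + 1) - y k + y (k + 1) ^ 2)
    (hℓ : ∀ k, ℓ k = mu * ℓ (k + 1)) {n : ℕ}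
    (hU : ‖lam * (y (n + 1) - ℓ (n + 1)) - (y n - ℓ n)‖ ≤ 8 * ‖mu‖ * ‖ℓ (n + 1)‖ ^ 2)
    (hS : ‖mu * (y (n + 1) - ℓ (n + 1)) - (y n - ℓ n)‖ ≤ 8 * ‖mu‖ ^ 2 * ‖ℓ (n + 1)‖ ^ 2)
    (hn : 24 * ‖mu‖ * ‖ℓ (n + 1)‖ ≤ 1) :
    ‖lam * (y (n + 2) - ℓ (n + 2)) - (y (n + 1) - ℓ (n + 1))‖
        ≤ 8 * ‖mu‖ * ‖ℓ (n + 2)‖ ^ 2 ∧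
      ‖mu * (y (n + 2) - ℓ (n + 2)) - (y (n + 1) - ℓ (n + 1))‖
        ≤ 8 * ‖mu‖ ^ 2 * ‖ℓ (n + 2)‖ ^ 2 := by
  set β := ‖mu‖
  set L := ‖ℓ (n + 2)‖
  have hβ : 0 < β := norm_pos_iff.mpr hmu₀
  have hL : ‖ℓ (n + 1)‖ = β * L := by rw [hℓ (n + 1), norm_mul]
  rw [hL] at hU hS hn
  have hdev : ‖y (n + 1) - ℓ (n + 1)‖ ≤ β * L :=
    (norm_le_of_eigencoords_le hlam hmu (B := β ^ 2 * L ^ 2) (by linarith) (by linarith)).1.trans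
      (by nlinarith [mul_le_mul_of_nonneg_left hn (by positivity : 0 ≤ β * L)])
  have hsq : ‖y (n + 1) ^ 2‖ ≤ 4 * β ^ 2 * L ^ 2 := by
    have : ‖y (n + 1)‖ ≤ 2 * (β * L) := by
      calc ‖y (n + 1)‖ = ‖(y (n + 1) - ℓ (n + 1)) + ℓ (n + 1)‖ := by rw [sub_add_cancel]
        _ ≤ 2 * (β * L) := (norm_add_le _ _).trans (by rw [hL]; linarith)
    rw [norm_pow]; nlinarith [norm_nonneg (y (n + 1))]
  have hrecU : mu * (lam * (y (n + 2) - ℓ (n + 2)) - (y (n + 1) - ℓ (n + 1)))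
      = (lam * (y (n + 1) - ℓ (n + 1)) - (y n - ℓ n)) + y (n + 1) ^ 2 := by
    linear_combination hy n + lam * hℓ (n + 1) - hℓ n
  have hrecS : lam * (mu * (y (n + 2) - ℓ (n + 2)) - (y (n + 1) - ℓ (n + 1)))
      = (mu * (y (n + 1) - ℓ (n + 1)) - (y n - ℓ n)) + y (n + 1) ^ 2 := by
    linear_combination hy n + lam * hℓ (n + 1) - hℓ n
  constructor
  · have h := (norm_add_le _ _).trans (add_le_add hU hsq)
    rw [← hrecU, norm_mul] at h
    nlinarith [norm_nonneg (lam * (y (n + 2) - ℓ (n + 2)) - (y (n + 1) - ℓ (n + 1)))]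
  · have h := (norm_add_le _ _).trans (add_le_add hS hsq)
    rw [← hrecS, norm_mul, hlam, one_mul] at h
    have hβ2 : β ^ 2 ≤ 1 / 4 := by nlinarith
    nlinarith [mul_le_mul_of_nonneg_right hβ2 (by positivity : 0 ≤ β ^ 2 * L ^ 2)]

lemma linearOrbit_eigencoords_le (hlam : ‖lam‖ = 1) (hmu : ‖mu‖ ≤ 1 / 2) (hmu₀ : mu ≠ 0)
    (hy : ∀ k, lam * mu * y (k + 2) = (lam + mu) * y (k + 1) - y k + y (k + 1) ^ 2)
    (hℓ : ∀ k, ℓ k = mu * ℓ (k + 1)) (h₀ : y 0 = ℓ 0) (h₁ : y 1 = ℓ 1) :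
    ∀ n, 24 * ‖mu‖ * ‖ℓ n‖ ≤ 1 →
      ‖lam * (y (n + 1) - ℓ (n + 1)) - (y n - ℓ n)‖ ≤ 8 * ‖mu‖ * ‖ℓ (n + 1)‖ ^ 2 ∧
      ‖mu * (y (n + 1) - ℓ (n + 1)) - (y n - ℓ n)‖ ≤ 8 * ‖mu‖ ^ 2 * ‖ℓ (n + 1)‖ ^ 2
  | 0, _ => by simp only [h₀, h₁, sub_self, mul_zero, norm_zero]; constructor <;> positivity
  | n + 1, hn => by
    have hn' : 24 * ‖mu‖ * ‖ℓ n‖ ≤ 1 := by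
      rw [hℓ n, norm_mul]
      nlinarith [norm_nonneg mu, norm_nonneg (ℓ (n + 1))]
    obtain ⟨hU, hS⟩ := linearOrbit_eigencoords_le hlam hmu hmu₀ hy hℓ h₀ h₁ n hn'
    exact linearOrbit_eigencoords_le_succ hlam hmu hmu₀ hy hℓ hU hS hn

theorem norm_sub_linearOrbit_le (hlam : ‖lam‖ = 1) (hmu : ‖mu‖ ≤ 1 / 2) (hmu₀ : mu ≠ 0)
    (hy : ∀ k, lam * mu * y (k + 2) = (lam + mu) * y (k + 1) - y k + y (k + 1) ^ 2)
    (hℓ : ∀ k, ℓ k = mu * ℓ (k + 1)) (h₀ : y 0 = ℓ 0) (h₁ : y 1 = ℓ 1) {n : ℕ}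
    (hn : 24 * ‖mu‖ * ‖ℓ n‖ ≤ 1) :
    ‖y (n + 1) - ℓ (n + 1)‖ ≤ 24 * ‖mu‖ * ‖ℓ (n + 1)‖ ^ 2 ∧
      ‖y n - ℓ n‖ ≤ 32 * ‖mu‖ ^ 2 * ‖ℓ (n + 1)‖ ^ 2 :=
  let ⟨hU, hS⟩ := linearOrbit_eigencoords_le hlam hmu hmu₀ hy hℓ h₀ h₁ n hn
  norm_le_of_eigencoords_le hlam hmu hU hS

end Shadowing

section Henon

variable {c a : ℂ}

lemma henonInv_iterate_snd (ha : a ≠ 0) (P : ℂ × ℂ) (k : ℕ) :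
    ((henonInv c a)^[k] P).2 = a * ((henonInv c a)^[k + 1] P).1 := by
  rw [Function.iterate_succ_apply', henonInv, mul_div_cancel₀ _ ha]

lemma henonInv_iterate_fst_add_two (ha : a ≠ 0) (P : ℂ × ℂ) (k : ℕ) :
    a ^ 2 * ((henonInv c a)^[k + 2] P).1
      = ((henonInv c a)^[k] P).1 - ((henonInv c a)^[k + 1] P).1 ^ 2 - c := by
  have h₁ : ((henonInv c a)^[k + 1] P).1 = ((henonInv c a)^[k] P).2 / a := by
    rw [Function.iterate_succ_apply']; rfl
  have h₂ : ((henonInv c a)^[k + 2] P).1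
      = (((henonInv c a)^[k] P).1 - (((henonInv c a)^[k] P).2 / a) ^ 2 - c) / a / a := by
    rw [Function.iterate_succ_apply', Function.iterate_succ_apply']; rfl
  rw [h₂, h₁]
  field_simp

lemma recurrence_sub_fixedPt_fst {lam : ℂ} (hlam : lam ≠ 0) {x : ℕ → ℂ}
    (hx : ∀ k, a ^ 2 * x (k + 2) = x k - x (k + 1) ^ 2 - cofLambda lam a) (k : ℕ) :
    lam * (-a ^ 2 / lam) * (x (k + 2) - (fixedPt lam a).1)
      = (lam + -a ^ 2 / lam) * (x (k + 1) - (fixedPt lam a).1) - (x k - (fixedPt lam a).1)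
        + (x (k + 1) - (fixedPt lam a).1) ^ 2 := by
  set xs := (fixedPt lam a).1
  have hprod : lam * (-a ^ 2 / lam) = -a ^ 2 := by field_simp
  have hsum : lam + -a ^ 2 / lam = 2 * xs := by simp only [xs, fixedPt]; field_simp; ring
  have hc : cofLambda lam a = xs - xs ^ 2 - a ^ 2 * xs := by simp only [xs, cofLambda, fixedPt]; ring
  rw [hprod, hsum]
  linear_combination (-1 : ℂ) * hx k + hc

/-- The point `q_a + μ^m v z` with `μ = -a²/λ` and `v = (μ/a, 1)`. -/
def stableSeed (lam a : ℂ) (m : ℕ) (z : ℂ) : ℂ × ℂ :=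
  fixedPt lam a + ((-a ^ 2 / lam) ^ m * ((-a ^ 2 / lam) / a) * z, (-a ^ 2 / lam) ^ m * z)

lemma norm_henonInv_iterate_fst_sub_le {lam : ℂ} (hlam : ‖lam‖ = 1) (ha : a ≠ 0)
    (ha2 : ‖a‖ ^ 2 ≤ 1 / 2) {z : ℂ} (hz : 24 * ‖a‖ ^ 3 * ‖z‖ ≤ 1) (m : ℕ) :
    ‖((henonInv (cofLambda lam a) a)^[m + 1] (stableSeed lam a m z)).1 - (fixedPt lam a).1
        - z / a‖ ≤ 24 * ‖z‖ ^ 2 ∧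
      ‖((henonInv (cofLambda lam a) a)^[m] (stableSeed lam a m z)).1 - (fixedPt lam a).1
        - -a ^ 2 / lam * (z / a)‖ ≤ 32 * ‖a‖ ^ 2 * ‖z‖ ^ 2 := by
  have hlam0 : lam ≠ 0 := norm_ne_zero_iff.mp (by rw [hlam]; exact one_ne_zero)
  set mu := -a ^ 2 / lam with hmu_def
  set P := stableSeed lam a m z
  set x : ℕ → ℂ := fun k => ((henonInv (cofLambda lam a) a)^[k] P).1
  set xs := (fixedPt lam a).1
  set w := z / a
  have hmu : ‖mu‖ = ‖a‖ ^ 2 := by rw [hmu_def, norm_div, norm_neg, norm_pow, hlam, div_one]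
  have hmu0 : mu ≠ 0 := div_ne_zero (neg_ne_zero.mpr (pow_ne_zero 2 ha)) hlam0
  have hw : ‖a‖ * ‖w‖ = ‖z‖ := by rw [← norm_mul, mul_div_cancel₀ _ ha]
  -- `ℓ k = μ ^ (m + 1 - k) * w`, written so that it makes sense for every `k`
  set ℓ : ℕ → ℂ := fun k => w * mu ^ (m + 1) / mu ^ k
  have hℓ : ∀ k, ℓ k = mu * ℓ (k + 1) := fun k => by simp only [ℓ]; field_simp; ring
  have hℓm : ℓ m = mu * w := by simp only [ℓ]; field_simp; ring
  have hℓm1 : ℓ (m + 1) = w := by simp only [ℓ]; field_simp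
  have h₀ : x 0 - xs = ℓ 0 := by
    simp only [x, ℓ, P, stableSeed, ← hmu_def, xs, w, Function.iterate_zero, id, Prod.fst_add]
    field_simp; ring
  have h₁ : x 1 - xs = ℓ 1 := by
    simp only [x, ℓ, P, stableSeed, ← hmu_def, xs, w, Function.iterate_one, henonInv,
      Prod.snd_add, fixedPt]
    field_simp; ring
  have hcond : 24 * ‖mu‖ * ‖ℓ m‖ ≤ 1 := by
    rw [hℓm, norm_mul, hmu]
    convert hz using 1
    rw [← hw]; ring
  obtain ⟨hnext, hcur⟩ := norm_sub_linearOrbit_le (y := fun k => x k - xs) hlam (hmu ▸ ha2)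
    hmu0 (recurrence_sub_fixedPt_fst hlam0 (henonInv_iterate_fst_add_two ha P)) hℓ h₀ h₁ hcond
  have hquad : ‖a‖ ^ 2 * ‖w‖ ^ 2 = ‖z‖ ^ 2 := by rw [← hw]; ring
  rw [hℓm1, hmu] at hnext hcur
  rw [hℓm] at hcur
  constructor
  · exact hnext.trans_eq (by rw [← hquad]; ring)
  · exact hcur.trans_eq (by rw [← hquad]; ring)

lemma norm_henonInv_iterate_sub_le {lam : ℂ} (hlam : ‖lam‖ = 1) (ha : a ≠ 0)
    (ha2 : ‖a‖ ^ 2 ≤ 1 / 2) {z : ℂ} (hz : 24 * ‖a‖ ^ 3 * ‖z‖ ≤ 1) (m : ℕ) :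
    ‖(henonInv (cofLambda lam a) a)^[m] (stableSeed lam a m z) - (lam / 2, z)‖
      ≤ ‖a‖ * (1 + ‖z‖ + 32 * ‖z‖ ^ 2) := by
  obtain ⟨hnext, hcur⟩ := norm_henonInv_iterate_fst_sub_le hlam ha ha2 hz m
  set x : ℕ → ℂ := fun k => ((henonInv (cofLambda lam a) a)^[k] (stableSeed lam a m z)).1
  set xs := (fixedPt lam a).1
  have hα : ‖a‖ ≤ 1 := by nlinarith [norm_nonneg a]
  have hiter : (henonInv (cofLambda lam a) a)^[m] (stableSeed lam a m z) = (x m, a * x (m + 1)) :=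
    Prod.ext rfl (henonInv_iterate_snd ha _ m)
  rw [hiter, Prod.mk_sub_mk, Prod.norm_mk]
  refine max_le ?_ ?_
  · have hxs : lam / 2 = xs + a ^ 2 / (2 * lam) := by simp only [xs, fixedPt]; ring
    have hmuw : ‖-a ^ 2 / lam * (z / a)‖ = ‖a‖ * ‖z‖ := by
      rw [norm_mul, norm_div, norm_div, norm_neg, norm_pow, hlam]; field_simp
    have hshift : ‖-(a ^ 2 / (2 * lam))‖ = ‖a‖ ^ 2 / 2 := by
      rw [norm_neg, norm_div, norm_mul, norm_pow, hlam]; norm_num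
    calc ‖x m - lam / 2‖
        = ‖(x m - xs - -a ^ 2 / lam * (z / a)) + -a ^ 2 / lam * (z / a) + -(a ^ 2 / (2 * lam))‖ := by
          rw [hxs]; ring_nf
      _ ≤ 32 * ‖a‖ ^ 2 * ‖z‖ ^ 2 + ‖a‖ * ‖z‖ + ‖a‖ ^ 2 / 2 :=
          norm_add₃_le.trans (by rw [hmuw, hshift]; linarith)
      _ ≤ ‖a‖ * (1 + ‖z‖ + 32 * ‖z‖ ^ 2) := by
          nlinarith [mul_nonneg (mul_nonneg (norm_nonneg a) (sq_nonneg ‖z‖)) (sub_nonneg.2 hα),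
            mul_nonneg (norm_nonneg a) (sub_nonneg.2 hα)]
  · have hxs : ‖xs‖ ≤ 1 := by
      calc ‖xs‖ ≤ ‖lam / 2‖ + ‖a ^ 2 / (2 * lam)‖ := norm_sub_le _ _
        _ = 1 / 2 + ‖a‖ ^ 2 / 2 := by
          rw [norm_div, norm_div, norm_mul, norm_pow, hlam]; norm_num
        _ ≤ 1 := by linarith
    calc ‖a * x (m + 1) - z‖ = ‖a * (x (m + 1) - xs - z / a) + a * xs‖ := by
          rw [mul_sub a _ (z / a), mul_div_cancel₀ _ ha]; ring_nf
      _ ≤ ‖a‖ * (24 * ‖z‖ ^ 2) + ‖a‖ * 1 := by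
          refine (norm_add_le _ _).trans (add_le_add ?_ ?_) <;> rw [norm_mul] <;> gcongr
      _ ≤ ‖a‖ * (1 + ‖z‖ + 32 * ‖z‖ ^ 2) := by nlinarith [norm_nonneg a, norm_nonneg z]

end Henon

/-- **Degeneration of the stable-manifold parametrization.** As `a → 0` along `P_λ`, the
parametrizations `F_a(z) = lim_m H^{-∘m}(q_a + μ^m v z)` of the strong stable manifolds
converge to `F₀(z) = (λ/2, z)` uniformly on compact subsets of `ℂ`. -/
theorem stable_manifold_degeneration (q : ℕ) (hq : 0 < q) (lam : ℂ)
    (hlam : IsPrimitiveRoot lam q) (K : Set ℂ) (hK : IsCompact K) (ε : ℝ) (hε : 0 < ε) :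
    ∃ δ > 0, ∀ a c : ℂ, 0 < ‖a‖ → ‖a‖ < δ → c = cofLambda lam a →
      ∀ F : ℂ → ℂ × ℂ,
        (∀ z : ℂ, Filter.Tendsto
          (fun m : ℕ => (henonInv c a)^[m]
            (fixedPt lam a + ((-a ^ 2 / lam) ^ m * ((-a ^ 2 / lam) / a) * z,
              (-a ^ 2 / lam) ^ m * z)))
          Filter.atTop (nhds (F z))) →
        ∀ z ∈ K, ‖F z - (lam / 2, z)‖ < ε := by
  obtain ⟨R, hR, hKR⟩ := hK.isBounded.exists_pos_norm_le
  set C := 1 + R + 32 * R ^ 2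
  have hC : 1 ≤ C := by nlinarith
  refine ⟨min (1 / (24 * C)) (ε / C), by positivity, ?_⟩
  rintro a c ha haδ rfl F hF z hz
  have haC : 24 * ‖a‖ * C < 1 := by
    have := haδ.trans_le (min_le_left _ _)
    rw [lt_div_iff₀ (by positivity)] at this
    linarith
  have haε : ‖a‖ * C < ε := (lt_div_iff₀ (by positivity)).mp (haδ.trans_le (min_le_right _ _))
  have hα : ‖a‖ ≤ 1 := by nlinarith
  have ha2 : ‖a‖ ^ 2 ≤ 1 / 2 := by nlinarith
  have hzR := hKR z hz
  have hz : 24 * ‖a‖ ^ 3 * ‖z‖ ≤ 1 :=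
    calc 24 * ‖a‖ ^ 3 * ‖z‖ ≤ 24 * ‖a‖ * C := by
          gcongr
          · exact pow_le_of_le_one (norm_nonneg a) hα (by norm_num)
          · nlinarith
      _ ≤ 1 := haC.le
  have hiter (m : ℕ) : _ ≤ ‖a‖ * C := (norm_henonInv_iterate_sub_le
    (hlam.norm'_eq_one hq.ne') (norm_pos_iff.mp ha) ha2 hz m).trans (by simp only [C]; gcongr)
  exact (le_of_tendsto' ((hF z).sub_const _).norm hiter).trans_lt haε
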